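/- Let M be the orthogonal projection of ℂ^{6qN} onto the span of the standard basis vectors e_{(b,j,x)} with q+1 ≤ j ≤ 2q. Then the squared Euclidean norm of M A^{−1} e_{(0,0,0)} equals ((1+e^{−1/q})/(1−e^{−3}))² · e^{−2(q+1)/q} (1−e^{−2})/(1−e^{−2/q}). -/

import Mathlib

open Matrix

noncomputable section

/-- The step function underlying the permutation matrix `P`: it sends the index `(j, x)`
to `((j+1) mod 3q, π_{j+1}(x))` for `0 ≤ j < q`, to `(j+1, x)` for `q ≤ j < 2q`, and to
`((j+1) mod 3q, π_{3q−j}⁻¹(x))` for `2q ≤ j < 3q` (here `π` is 0-indexed). -/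
def stepFn (q N : ℕ) (π : Fin q → Equiv.Perm (Fin N)) :
    Fin (3 * q) × Fin N → Fin (3 * q) × Fin N := fun p =>
  if h : (p.1 : ℕ) < q then
    (⟨((p.1 : ℕ) + 1) % (3 * q), Nat.mod_lt _ ((Nat.zero_le _).trans_lt p.1.isLt)⟩,
      π ⟨(p.1 : ℕ), h⟩ p.2)
  else if h2 : (p.1 : ℕ) < 2 * q then
    (⟨((p.1 : ℕ) + 1) % (3 * q), Nat.mod_lt _ ((Nat.zero_le _).trans_lt p.1.isLt)⟩, p.2)
  else
    (⟨((p.1 : ℕ) + 1) % (3 * q), Nat.mod_lt _ ((Nat.zero_le _).trans_lt p.1.isLt)⟩,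
      (π ⟨3 * q - 1 - (p.1 : ℕ), by have := p.1.isLt; omega⟩)⁻¹ p.2)

/-- The `3qN × 3qN` permutation matrix `P`, sending basis vector `e_{(j,x)}` to
`e_{stepFn (j,x)}`. -/
def permMat (q N : ℕ) (π : Fin q → Equiv.Perm (Fin N)) :
    Matrix (Fin (3 * q) × Fin N) (Fin (3 * q) × Fin N) ℂ :=
  Matrix.of fun r c => if r = stepFn q N π c then 1 else 0

/-- The inverse `P⁻¹` of the permutation matrix `P`, sending `e_{stepFn (j,x)}` to
`e_{(j,x)}`. -/
def permMatInv (q N : ℕ) (π : Fin q → Equiv.Perm (Fin N)) :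
    Matrix (Fin (3 * q) × Fin N) (Fin (3 * q) × Fin N) ℂ :=
  Matrix.of fun r c => if stepFn q N π r = c then 1 else 0

/-- The `6qN × 6qN` matrix
`A = (1+e^{−1/q})⁻¹ (|0⟩⟨1| ⊗ (I − e^{−1/q} P) + |1⟩⟨0| ⊗ (I − e^{−1/q} P⁻¹))`. -/
def qlspMat (q N : ℕ) (π : Fin q → Equiv.Perm (Fin N)) :
    Matrix (Fin 2 × Fin (3 * q) × Fin N) (Fin 2 × Fin (3 * q) × Fin N) ℂ :=
  Matrix.of fun r c =>
    ((((1 : ℝ) + Real.exp (-1 / q)) : ℝ) : ℂ)⁻¹ *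
      (if r.1 = 0 ∧ c.1 = 1 then
        ((1 : Matrix (Fin (3 * q) × Fin N) (Fin (3 * q) × Fin N) ℂ)
            - (Real.exp (-1 / q) : ℂ) • permMat q N π) r.2 c.2
      else if r.1 = 1 ∧ c.1 = 0 then
        ((1 : Matrix (Fin (3 * q) × Fin N) (Fin (3 * q) × Fin N) ℂ)
            - (Real.exp (-1 / q) : ℂ) • permMatInv q N π) r.2 c.2
      else 0)

/-- The orthogonal projection `M` of `ℂ^{6qN}` onto the span of the standard basis
vectors `e_{(b,j,x)}` with `q+1 ≤ j ≤ 2q`, as a diagonal matrix. -/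
def projMat (q N : ℕ) :
    Matrix (Fin 2 × Fin (3 * q) × Fin N) (Fin 2 × Fin (3 * q) × Fin N) ℂ :=
  Matrix.diagonal fun p =>
    if q + 1 ≤ (p.2.1 : ℕ) ∧ (p.2.1 : ℕ) ≤ 2 * q then 1 else 0

/-!
`P` is the permutation matrix of `σ = stepFn`, which advances the column index `j` cyclically
and acts on the fibre by `π₁, …, π_q`, then by the identity, then by `π_q⁻¹, …, π₁⁻¹`; so
`σ^{3q}` fixes `(0, x)`, and the orbit of `(0, x)` meets column `j` exactly once, at step `j`.
With `a = e^{-1/q}` the geometric series gives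
`(1 - aP) ∑_{k<3q} a^k e_{σ^k(0,x)} = (1 - e^{-3}) e_{(0,x)}`, and since `A` is block
antidiagonal, `A⁻¹ e_{(0,0,0)}` is `(1 + a)/(1 - e^{-3})` times this orbit vector in the block
`b = 1`. The projection keeps the steps `q+1 ≤ k ≤ 2q`, leaving a geometric sum in `a²`.
Invertibility of `1 - aP` also comes from the geometric series, summed up to the order of `σ`.
-/

open Finset Equiv

section PermMatrix

variable {K n : Type*} [NormedField K] [Fintype n] [DecidableEq n]

theorem permMatrixHom_mulVec_single (σ : Perm n) (p : n) :
    permMatrixHom (R := K) σ *ᵥ Pi.single p 1 = Pi.single (σ p) 1 := by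
  ext r
  simp [permMatrixHom_apply, Pi.single_apply, Equiv.symm_apply_eq]

theorem smul_permMatrixHom_pow_mulVec_single (σ : Perm n) (a : K) (p : n) (k : ℕ) :
    (a • permMatrixHom (R := K) σ) ^ k *ᵥ Pi.single p 1 = a ^ k • Pi.single ((σ ^ k) p) 1 := by
  rw [smul_pow, ← map_pow, smul_mulVec, permMatrixHom_mulVec_single]

theorem one_sub_smul_permMatrixHom_mul_geom_sum (σ : Perm n) (a : K) (m : ℕ) :
    (1 - a • permMatrixHom (R := K) σ) * ∑ k ∈ range m, (a • permMatrixHom (R := K) σ) ^ k =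
      1 - a ^ m • permMatrixHom (R := K) (σ ^ m) := by
  rw [mul_neg_geom_sum, smul_pow, map_pow]

theorem isUnit_one_sub_smul_permMatrixHom (σ : Perm n) {a : K} (ha : ‖a‖ < 1) :
    IsUnit (1 - a • permMatrixHom (R := K) σ) := by
  have hpow : a ^ orderOf σ ≠ 1 := fun h => by
    have := norm_pow a (orderOf σ) ▸ congrArg norm h
    exact (pow_lt_one₀ (norm_nonneg a) ha (orderOf_pos σ).ne').ne (by simpa using this)
  refine (isUnit_iff_isUnit_det _).2 (isUnit_det_of_right_inverse
    (B := (1 - a ^ orderOf σ)⁻¹ • ∑ k ∈ range (orderOf σ), (a • permMatrixHom (R := K) σ) ^ k) ?_)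
  rw [mul_smul_comm, one_sub_smul_permMatrixHom_mul_geom_sum, pow_orderOf_eq_one, map_one,
    show (1 : Matrix n n K) - a ^ orderOf σ • 1 = (1 - a ^ orderOf σ) • 1 by
      rw [sub_smul, one_smul], smul_smul, inv_mul_cancel₀ (sub_ne_zero.2 hpow.symm), one_smul]

theorem one_sub_smul_permMatrixHom_mulVec_orbit_sum (σ : Perm n) (a : K) (p : n) {m : ℕ}
    (hm : (σ ^ m) p = p) :
    (1 - a • permMatrixHom (R := K) σ) *ᵥ ∑ k ∈ range m, a ^ k • Pi.single ((σ ^ k) p) 1 =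
      (1 - a ^ m) • Pi.single p 1 := by
  simp_rw [← smul_permMatrixHom_pow_mulVec_single, ← sum_mulVec, mulVec_mulVec,
    one_sub_smul_permMatrixHom_mul_geom_sum, sub_mulVec, smul_mulVec, one_mulVec,
    permMatrixHom_mulVec_single, hm, sub_smul, one_smul]

end PermMatrix

theorem val_finRotate {n : ℕ} (i : Fin n) : (finRotate n i : ℕ) = (i + 1) % n := by
  obtain _ | n := n
  · exact i.elim0
  · rw [coe_finRotate]
    split_ifs with h
    · simp [h]
    · have : (i : ℕ) ≠ n := fun h' => h (Fin.ext h')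
      exact (Nat.mod_eq_of_lt (by omega)).symm

theorem Fin.sum_univ_ite_le_and_le {M : Type*} [AddCommMonoid M] (f : ℕ → M) {a b n : ℕ}
    (hb : b < n) :
    ∑ j : Fin n, (if a ≤ (j : ℕ) ∧ (j : ℕ) ≤ b then f j else 0) = ∑ j ∈ Icc a b, f j := by
  rw [Fin.sum_univ_eq_sum_range (fun j => if a ≤ j ∧ j ≤ b then f j else 0), ← sum_filter]
  congr 1
  ext j
  simp only [mem_filter, mem_range, mem_Icc]
  omega

theorem Real.exp_neg_one_div_pow (q k : ℕ) :
    Real.exp (-1 / q) ^ k = Real.exp (-k / q) := by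
  rw [← Real.exp_nat_mul]
  ring_nf

theorem Real.sum_Icc_exp_neg_one_div_pow_sq {q : ℕ} (hq : 0 < q) :
    ∑ j ∈ Icc (q + 1) (2 * q), (Real.exp (-1 / q) ^ j) ^ 2 =
      Real.exp (-2 * (q + 1) / q) * (1 - Real.exp (-2)) / (1 - Real.exp (-2 / q)) := by
  have hr : Real.exp (-2 / q) ≠ 1 := (Real.exp_lt_one_iff.2 (div_neg_of_neg_of_pos (by norm_num)
    (by exact_mod_cast hq))).ne
  have hpow (j : ℕ) : (Real.exp (-1 / q) ^ j) ^ 2 = Real.exp (-2 / q) ^ j := by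
    rw [← pow_mul, mul_comm, pow_mul, Real.exp_neg_one_div_pow]
    norm_num
  have hexp (j : ℕ) : Real.exp (-2 / q) ^ j = Real.exp (-2 * j / q) := by
    rw [← Real.exp_nat_mul]; ring_nf
  simp_rw [hpow]
  rw [← Ico_add_one_right_eq_Icc, geom_sum_Ico' hr (by omega),
    show 2 * q + 1 = (q + 1) + q by ring, pow_add _ (q + 1) q, hexp (q + 1), hexp q,
    mul_div_cancel_right₀ _ (by exact_mod_cast hq.ne' : (q : ℝ) ≠ 0)]
  push_cast
  ring

section StepPerm

variable {q N : ℕ} (π : Fin q → Perm (Fin N))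

def fiberPerm (j : ℕ) : Perm (Fin N) :=
  if h : j < q then π ⟨j, h⟩
  else if h₂ : j < 2 * q then 1
  else if h₃ : j < 3 * q then (π ⟨3 * q - 1 - j, by omega⟩)⁻¹
  else 1

def stepPerm : Perm (Fin (3 * q) × Fin N) :=
  (finRotate (3 * q)).prodShear fun j => fiberPerm π j

theorem coe_stepPerm : ⇑(stepPerm π) = stepFn q N π := by
  funext p
  refine Prod.ext (Fin.ext ?_) ?_
  · simp only [stepPerm, prodShear_apply, val_finRotate]
    unfold stepFn
    split_ifs <;> rfl
  · simp only [stepPerm, stepFn, fiberPerm, prodShear_apply]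
    have := p.1.isLt
    split_ifs <;> rfl

def fiberProd : ℕ → Perm (Fin N)
  | 0 => 1
  | k + 1 => fiberPerm π k * fiberProd k

theorem stepPerm_pow_apply_zero (hq : 0 < q) {k : ℕ} (hk : k ≤ 3 * q) (x : Fin N) :
    (stepPerm π ^ k) (⟨0, by omega⟩, x) =
      (⟨k % (3 * q), Nat.mod_lt _ (by omega)⟩, fiberProd π k x) := by
  induction k with
  | zero => simp [fiberProd]
  | succ k ih =>
    rw [pow_succ', Perm.mul_apply, ih (by omega)]
    refine Prod.ext (Fin.ext ?_) ?_ <;>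
      simp only [stepPerm, prodShear_apply, val_finRotate, fiberProd, Perm.mul_apply,
        Nat.mod_eq_of_lt (by omega : k < 3 * q)]

theorem fiberProd_add_of_le {k : ℕ} (hk : k ≤ q) : fiberProd π (q + k) = fiberProd π q := by
  induction k with
  | zero => rfl
  | succ k ih =>
    have h1 : fiberPerm π (q + k) = 1 := by unfold fiberPerm; split_ifs <;> first | rfl | omega
    rw [← add_assoc, fiberProd, ih (by omega), h1, one_mul]

theorem fiberProd_two_mul_add {k : ℕ} (hk : k ≤ q) :
    fiberProd π (2 * q + k) = fiberProd π (q - k) := by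
  induction k with
  | zero => rw [add_zero, two_mul, fiberProd_add_of_le π le_rfl]; rfl
  | succ k ih =>
    have h1 : fiberPerm π (2 * q + k) = (π ⟨q - 1 - k, by omega⟩)⁻¹ := by
      unfold fiberPerm; split_ifs <;> first | omega | congr 3; omega
    have h2 : fiberProd π (q - k) = π ⟨q - 1 - k, by omega⟩ * fiberProd π (q - (k + 1)) := by
      obtain ⟨m, hm⟩ : ∃ m, q - k = m + 1 := ⟨q - (k + 1), by omega⟩
      rw [hm, show q - (k + 1) = m by omega, fiberProd]
      unfold fiberPerm; split_ifs <;> first | omega | congr 3; omega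
    rw [← add_assoc, fiberProd, ih (by omega), h1, h2, inv_mul_cancel_left]

theorem fiberProd_three_mul : fiberProd π (3 * q) = 1 := by
  rw [show 3 * q = 2 * q + q by ring, fiberProd_two_mul_add π le_rfl, Nat.sub_self]; rfl

theorem stepPerm_pow_three_mul_apply_zero (hq : 0 < q) (x : Fin N) :
    (stepPerm π ^ (3 * q)) (⟨0, by omega⟩, x) = (⟨0, by omega⟩, x) := by
  rw [stepPerm_pow_apply_zero π hq le_rfl, fiberProd_three_mul]
  simp

end StepPerm

section Qlsp

variable {q N : ℕ} (π : Fin q → Perm (Fin N))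

theorem permMat_eq_permMatrixHom : permMat q N π = permMatrixHom (stepPerm π) := by
  ext r c
  simp [permMat, permMatrixHom_apply, Equiv.eq_symm_apply, coe_stepPerm, eq_comm]

theorem permMatInv_eq_permMatrixHom : permMatInv q N π = permMatrixHom (stepPerm π)⁻¹ := by
  ext r c
  simp [permMatInv, permMatrixHom_apply, coe_stepPerm]

theorem qlspMat_mulVec_apply (w : Fin 2 × Fin (3 * q) × Fin N → ℂ) (b : Fin 2)
    (r : Fin (3 * q) × Fin N) :
    (qlspMat q N π *ᵥ w) (b, r) = ((1 + Real.exp (-1 / q) : ℝ) : ℂ)⁻¹ *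
      if b = 0 then ((1 - (Real.exp (-1 / q) : ℂ) • permMat q N π) *ᵥ fun r => w (1, r)) r
      else ((1 - (Real.exp (-1 / q) : ℂ) • permMatInv q N π) *ᵥ fun r => w (0, r)) r := by
  simp only [mulVec, dotProduct, Fintype.sum_prod_type, Fin.sum_univ_two, qlspMat, of_apply]
  fin_cases b <;> simp [mul_sum, mul_assoc]

theorem sum_norm_sq_projMat_mulVec (v : Fin 2 × Fin (3 * q) × Fin N → ℂ) :
    ∑ p, ‖(projMat q N *ᵥ v) p‖ ^ 2 =
      ∑ j : Fin (3 * q), if q + 1 ≤ (j : ℕ) ∧ (j : ℕ) ≤ 2 * q then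
        ∑ b, ∑ x, ‖v (b, j, x)‖ ^ 2 else 0 := by
  rw [Fintype.sum_prod_type, sum_comm, Fintype.sum_prod_type]
  refine sum_congr rfl fun j _ => ?_
  rw [sum_comm]
  split_ifs with h <;> simp only [projMat, mulVec_diagonal, h, and_self, ↓reduceIte, one_mul,
    zero_mul, norm_zero, ne_eq, OfNat.ofNat_ne_zero, not_false_eq_true, zero_pow, sum_const_zero]

theorem isUnit_qlspMat (hq : 0 < q) : IsUnit (qlspMat q N π) := by
  have ha : ‖(Real.exp (-1 / q) : ℂ)‖ < 1 := by
    rw [Complex.norm_real, Real.norm_eq_abs, abs_of_pos (Real.exp_pos _), Real.exp_lt_one_iff]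
    exact div_neg_of_neg_of_pos (by norm_num) (by exact_mod_cast hq)
  have hU := mulVec_injective_iff_isUnit.2 (isUnit_one_sub_smul_permMatrixHom (stepPerm π) ha)
  have hV := mulVec_injective_iff_isUnit.2 (isUnit_one_sub_smul_permMatrixHom (stepPerm π)⁻¹ ha)
  rw [← permMat_eq_permMatrixHom] at hU
  rw [← permMatInv_eq_permMatrixHom] at hV
  have hc : ((1 + Real.exp (-1 / q) : ℝ) : ℂ)⁻¹ ≠ 0 :=
    inv_ne_zero (Complex.ofReal_ne_zero.2 (by positivity))
  refine mulVec_injective_iff_isUnit.1 fun v w h => ?_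
  have h1 := hU <| funext fun r => mul_left_cancel₀ hc <| by
    simpa [qlspMat_mulVec_apply] using congrFun h (0, r)
  have h0 := hV <| funext fun r => mul_left_cancel₀ hc <| by
    simpa [qlspMat_mulVec_apply] using congrFun h (1, r)
  funext ⟨b, r⟩
  fin_cases b
  exacts [congrFun h0 r, congrFun h1 r]

def orbitVec (a : ℂ) (p : Fin (3 * q) × Fin N) : Fin (3 * q) × Fin N → ℂ :=
  ∑ k ∈ range (3 * q), a ^ k • Pi.single ((stepPerm π ^ k) p) 1

theorem orbitVec_apply_zero (hq : 0 < q) (a : ℂ) (x₀ : Fin N) (j : Fin (3 * q)) (x : Fin N) :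
    orbitVec π a (⟨0, by omega⟩, x₀) (j, x) =
      if x = fiberProd π j x₀ then a ^ (j : ℕ) else 0 := by
  rw [orbitVec, Finset.sum_apply, sum_eq_single (j : ℕ)]
  · simp [stepPerm_pow_apply_zero π hq j.isLt.le, Pi.single_apply, Prod.ext_iff, Fin.ext_iff,
      Nat.mod_eq_of_lt j.isLt]
  · intro k hk hkj
    simp [stepPerm_pow_apply_zero π hq (mem_range.1 hk).le, Prod.ext_iff, Fin.ext_iff,
      Nat.mod_eq_of_lt (mem_range.1 hk), Ne.symm hkj]
  · simp

theorem sum_norm_sq_orbitVec_apply_zero (hq : 0 < q) (a : ℂ) (x₀ : Fin N) (j : Fin (3 * q)) :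
    ∑ x, ‖orbitVec π a (⟨0, by omega⟩, x₀) (j, x)‖ ^ 2 = ‖a ^ (j : ℕ)‖ ^ 2 := by
  simp [orbitVec_apply_zero π hq, apply_ite]

theorem qlspMat_inv_mulVec_single (hq : 0 < q) (x₀ : Fin N) :
    (qlspMat q N π)⁻¹ *ᵥ Pi.single (0, ⟨0, by omega⟩, x₀) 1 = fun p =>
      if p.1 = 1 then
        ((((1 + Real.exp (-1 / q)) / (1 - Real.exp (-3)) : ℝ) : ℂ) •
          orbitVec π (Real.exp (-1 / q)) (⟨0, by omega⟩, x₀)) p.2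
      else 0 := by
  have h3 : 1 - Real.exp (-3) ≠ 0 := sub_ne_zero.2 (Real.exp_lt_one_iff.2 (by norm_num)).ne'
  have hpow : (Real.exp (-1 / q) : ℂ) ^ (3 * q) = (Real.exp (-3) : ℝ) := by
    rw [← Complex.ofReal_pow, Real.exp_neg_one_div_pow]
    congr 2
    push_cast
    field_simp
  have hK : ((1 + Real.exp (-1 / q) : ℝ) : ℂ)⁻¹ *
      (((1 + Real.exp (-1 / q)) / (1 - Real.exp (-3)) : ℝ) : ℂ) * (1 - (Real.exp (-3) : ℂ)) = 1 := by
    rw [← Complex.ofReal_one, ← Complex.ofReal_sub, ← Complex.ofReal_inv, ← Complex.ofReal_mul,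
      ← Complex.ofReal_mul]
    congr 1
    field_simp
  have := (isUnit_qlspMat π hq).invertible
  refine inv_mulVec_eq_vec (funext fun ⟨b, r⟩ => ?_)
  rw [qlspMat_mulVec_apply]
  fin_cases b
  · simp only [Fin.zero_eta, Fin.isValue, ↓reduceIte]
    rw [mulVec_smul, permMat_eq_permMatrixHom, orbitVec,
      one_sub_smul_permMatrixHom_mulVec_orbit_sum _ _ _ (stepPerm_pow_three_mul_apply_zero π hq x₀),
      hpow]
    simp only [Pi.smul_apply, smul_eq_mul, Pi.single_apply, Prod.mk.injEq, true_and]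
    linear_combination (-(if r = (⟨0, by omega⟩, x₀) then 1 else 0 : ℂ)) * hK
  · simp [← Pi.zero_def]

end Qlsp

/-- Let `M` be the orthogonal projection of `ℂ^{6qN}` onto the span of the
standard basis vectors `e_{(b,j,x)}` with `q+1 ≤ j ≤ 2q`. Then the squared Euclidean norm
of `M A⁻¹ e_{(0,0,0)}` equals
`((1+e^{−1/q})/(1−e^{−3}))² · e^{−2(q+1)/q} (1−e^{−2})/(1−e^{−2/q})`. -/
theorem qlspMat_proj_inv_mulVec_single_norm_sq (q N : ℕ) (hq : 1 ≤ q) (hN : 1 ≤ N)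
    (π : Fin q → Equiv.Perm (Fin N)) :
    ∑ p : Fin 2 × Fin (3 * q) × Fin N,
        ‖(projMat q N).mulVec
          ((qlspMat q N π)⁻¹.mulVec
            (Pi.single ((0 : Fin 2), (⟨0, by omega⟩ : Fin (3 * q)),
              (⟨0, by omega⟩ : Fin N)) 1)) p‖ ^ 2 =
      ((1 + Real.exp (-1 / q)) / (1 - Real.exp (-3))) ^ 2 *
        (Real.exp (-2 * (q + 1) / q) * (1 - Real.exp (-2)) / (1 - Real.exp (-2 / q))) := by
  rw [qlspMat_inv_mulVec_single π hq, sum_norm_sq_projMat_mulVec,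
    ← Real.sum_Icc_exp_neg_one_div_pow_sq hq, mul_sum, ← Fin.sum_univ_ite_le_and_le _ (by omega : 2 * q < 3 * q)]
  refine sum_congr rfl fun j _ => if_congr Iff.rfl ?_ rfl
  simp only [Fin.sum_univ_two, Fin.isValue, zero_ne_one, if_false, if_true, norm_zero,
    ne_eq, OfNat.ofNat_ne_zero, not_false_eq_true, zero_pow, sum_const_zero, zero_add,
    Pi.smul_apply, smul_eq_mul, norm_mul, mul_pow, ← mul_sum,
    sum_norm_sq_orbitVec_apply_zero π hq, ← Complex.ofReal_pow, Complex.norm_real,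
    Real.norm_eq_abs, sq_abs]
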